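/- Let M be a topological space and ≪ a binary relation on M with open pasts and open futures, and let μ be a finite Borel measure on M with full support (μ(W) > 0 for every nonempty open set W ⊆ M). If U and V are past sets with U ⊆ V, then μ(U) = μ(V) implies U = V. -/

import Mathlib

open Set Filter Topology MeasureTheory

/-- The chronological past of a set `A` with respect to relation `r`. -/
def chronPast {M : Type*} (r : M → M → Prop) (A : Set M) : Set M :=
  {x | ∃ y ∈ A, r x y}

/-- The chronological future of a set `A` with respect to relation `r`. -/
def chronFut {M : Type*} (r : M → M → Prop) (A : Set M) : Set M :=
  {x | ∃ y ∈ A, r y x}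

/-- A past set: `I⁻(U) = U`. -/
def IsPastSet {M : Type*} (r : M → M → Prop) (U : Set M) : Prop :=
  chronPast r U = U

/-- A future set: `I⁺(U) = U`. -/
def IsFutureSet {M : Type*} (r : M → M → Prop) (U : Set M) : Prop :=
  chronFut r U = U

/-- An indecomposable past set (IP): a nonempty past set that is not the union of
two past sets, each a proper subset of it. -/
def IsIP {M : Type*} (r : M → M → Prop) (U : Set M) : Prop :=
  U.Nonempty ∧ IsPastSet r U ∧
    ¬ ∃ A B : Set M, IsPastSet r A ∧ IsPastSet r B ∧ A ⊂ U ∧ B ⊂ U ∧ A ∪ B = U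

/-- An indecomposable future set (IF). -/
def IsIF {M : Type*} (r : M → M → Prop) (U : Set M) : Prop :=
  U.Nonempty ∧ IsFutureSet r U ∧
    ¬ ∃ A B : Set M, IsFutureSet r A ∧ IsFutureSet r B ∧ A ⊂ U ∧ B ⊂ U ∧ A ∪ B = U

/-- A terminal indecomposable past set (TIP): an IP not of the form `I⁻(p)`. -/
def IsTIP {M : Type*} (r : M → M → Prop) (U : Set M) : Prop :=
  IsIP r U ∧ ∀ p : M, U ≠ chronPast r {p}

/-- A terminal indecomposable future set (TIF): an IF not of the form `I⁺(p)`. -/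
def IsTIF {M : Type*} (r : M → M → Prop) (U : Set M) : Prop :=
  IsIF r U ∧ ∀ p : M, U ≠ chronFut r {p}

/-- A minimal TIP: a TIP containing no TIP as a proper subset. -/
def IsMinTIP {M : Type*} (r : M → M → Prop) (U : Set M) : Prop :=
  IsTIP r U ∧ ∀ V : Set M, IsTIP r V → V ⊆ U → V = U

/- If `U ⊆ V` have equal finite measure, then `V \ U` is null, so by full support the
open set `V` lies in the closure of `U`. For `p ∈ V` pick `q ∈ V` with `p ≪ q`; the open set `I⁺(p)`
is a neighbourhood of `q ∈ closure U`, so it meets `U`, and `p ∈ I⁻(U) = U`. -/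

theorem IsPastSet.eq_biUnion {M : Type*} {r : M → M → Prop} {U : Set M} (hU : IsPastSet r U) :
    U = ⋃ y ∈ U, chronPast r {y} := by
  conv_lhs => rw [← hU]
  ext x
  simp [chronPast]

theorem IsPastSet.isOpen {M : Type*} [TopologicalSpace M] {r : M → M → Prop}
    (hOpenPast : ∀ p : M, IsOpen (chronPast r {p})) {U : Set M} (hU : IsPastSet r U) :
    IsOpen U := by
  rw [hU.eq_biUnion]
  exact isOpen_biUnion fun y _ => hOpenPast y

theorem IsPastSet.subset_of_subset_closure {M : Type*} [TopologicalSpace M] {r : M → M → Prop}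
    (hOpenFut : ∀ p : M, IsOpen (chronFut r {p})) {U V : Set M} (hU : IsPastSet r U)
    (hV : IsPastSet r V) (hVU : V ⊆ closure U) : V ⊆ U := by
  intro p hp
  rw [← hV] at hp
  obtain ⟨q, hqV, hpq⟩ := hp
  obtain ⟨x, hx, hxU⟩ : (chronFut r {p} ∩ U).Nonempty :=
    mem_closure_iff.mp (hVU hqV) _ (hOpenFut p) ⟨p, rfl, hpq⟩
  obtain ⟨_, rfl, hpx⟩ := hx
  rw [← hU]
  exact ⟨x, hxU, hpx⟩

theorem IsOpen.subset_closure_of_measure_sdiff_eq_zero {X : Type*} [TopologicalSpace X]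
    [MeasurableSpace X] {μ : Measure X} [μ.IsOpenPosMeasure] {U V : Set X} (hV : IsOpen V)
    (hnull : μ (V \ U) = 0) : V ⊆ closure U := by
  have hinterior : V \ closure U ⊆ interior (V \ U) :=
    interior_maximal (sdiff_subset_sdiff_right subset_closure) (hV.sdiff isClosed_closure)
  rw [Measure.interior_eq_empty_of_null hnull, subset_empty_iff, sdiff_eq_empty] at hinterior
  exact hinterior

/-- A finite Borel measure of full support distinguishes nested past sets. -/
theorem stmt_4 {M : Type*} [TopologicalSpace M] [MeasurableSpace M] [BorelSpace M]
    (r : M → M → Prop)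
    (hOpenPast : ∀ p : M, IsOpen (chronPast r {p}))
    (hOpenFut : ∀ p : M, IsOpen (chronFut r {p}))
    (μ : Measure M) [IsFiniteMeasure μ]
    (hfull : ∀ W : Set M, IsOpen W → W.Nonempty → 0 < μ W)
    (U V : Set M) (hU : IsPastSet r U) (hV : IsPastSet r V)
    (hUV : U ⊆ V) (hμ : μ U = μ V) :
    U = V := by
  have : μ.IsOpenPosMeasure := ⟨fun W hW hne => (hfull W hW hne).ne'⟩
  have hUmeas : NullMeasurableSet U μ := (hU.isOpen hOpenPast).measurableSet.nullMeasurableSet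
  have hnull : μ (V \ U) = 0 := by
    rw [measure_sdiff hUV hUmeas (measure_ne_top μ U), hμ, tsub_self]
  have hVU : V ⊆ closure U := (hV.isOpen hOpenPast).subset_closure_of_measure_sdiff_eq_zero hnull
  exact hUV.antisymm (hU.subset_of_subset_closure hOpenFut hV hVU)
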